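/- arXiv:2305.07315 — 7 statements merged into one kernel-verified Lean document; each statement's English description precedes it below -/
import Mathlib

section
/- Let x ∈ [0,1]^n (n ≥ 1) and let i ∈ {1,…,n}. Then harden(augmented-bit(x, i)) = harden(x_i). In particular, if the representative bit x_i is hard-equivalent to a target boolean function g, i.e. harden(x_i) = g(harden(x_1),…,harden(x_n)), then so is the augmented bit: harden(augmented-bit(x, i)) = g(harden(x_1),…,harden(x_n)). -/
/-- `harden` maps a soft-bit to a hard-bit: 1 if `x > 1/2`, else 0. -/
noncomputable def harden (x : ℝ) : ℕ := if x > 1/2 then 1 else 0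

/-- `augmentedBit x i = 1/2 + x̄·|x i − 1/2|` if `x i > 1/2`, else `x i + x̄·|x i − 1/2|`,
where `x̄` is the mean of the entries of `x`. -/
noncomputable def augmentedBit {n : ℕ} (x : Fin n → ℝ) (i : Fin n) : ℝ :=
  let xbar := (∑ j, x j) / n
  let mf := xbar * |x i - 1/2|
  if x i > 1/2 then 1/2 + mf else x i + mf

/-- Hardening the augmented bit equals hardening the representative bit; in particular if the
representative bit is hard-equivalent to a target boolean function `g` then so is the
augmented bit. -/
theorem stmt1 (n : ℕ) (hn : 1 ≤ n) (x : Fin n → ℝ) (hx : ∀ j, x j ∈ Set.Icc (0:ℝ) 1)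
    (i : Fin n) :
    harden (augmentedBit x i) = harden (x i) ∧
      ∀ g : (Fin n → ℕ) → ℕ,
        harden (x i) = g (fun j => harden (x j)) →
          harden (augmentedBit x i) = g (fun j => harden (x j)) := by
  have hn' : (0:ℝ) < n := by exact_mod_cast Nat.lt_of_lt_of_le Nat.zero_lt_one hn
  have hsum_nonneg : (0:ℝ) ≤ ∑ j, x j :=
    Finset.sum_nonneg fun j _ => (hx j).1
  have hsum_le : (∑ j, x j) ≤ n := by
    calc (∑ j, x j) ≤ ∑ _j : Fin n, (1:ℝ) :=
          Finset.sum_le_sum fun j _ => (hx j).2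
      _ = n := by simp
  have hbar_nonneg : (0:ℝ) ≤ (∑ j, x j) / n := div_nonneg hsum_nonneg hn'.le
  have hbar_le : (∑ j, x j) / n ≤ 1 := by
    rw [div_le_one hn']; exact hsum_le
  have key : harden (augmentedBit x i) = harden (x i) := by
    unfold harden augmentedBit
    by_cases h : x i > 1/2
    · simp only [h, if_pos]
      have hxi : (0:ℝ) < x i := lt_trans (by norm_num) h
      have hsumpos : (0:ℝ) < ∑ j, x j := by
        have := Finset.single_le_sum (f := x) (fun j _ => (hx j).1) (Finset.mem_univ i)
        linarith
      have hbarpos : (0:ℝ) < (∑ j, x j) / n := div_pos hsumpos hn'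
      have habs : (0:ℝ) < |x i - 1/2| := abs_pos.mpr (by linarith)
      have : (1:ℝ)/2 < 1/2 + (∑ j, x j) / n * |x i - 1/2| := by
        nlinarith
      rw [if_pos this]
    · simp only [h, if_neg, if_false]
      push_neg at h
      have habs : |x i - 1/2| = 1/2 - x i := by
        rw [abs_of_nonpos (by linarith)]; ring
      have : x i + (∑ j, x j) / n * |x i - 1/2| ≤ 1/2 := by
        rw [habs]
        nlinarith
      rw [if_neg (not_lt.mpr this)]
  exact ⟨key, fun g hg => key.trans hg⟩
end

section
/- Let n ≥ 1 and let x ∈ [0,1]^n with x_j ≠ 1/2 for every j. Let i be an index at which x attains its minimum. Then harden(augmented-bit(x, i)) = 1 if and only if harden(x_j) = 1 for all j; i.e. the function ∂∧(x) = augmented-bit(x, argmin_j x_j) is hard-equivalent to the boolean conjunction ⋀_{j=1}^n x_j. -/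
/-- `∂∧(x) = augmentedBit x (argmin_j x j)` is hard-equivalent to boolean conjunction. -/
theorem stmt3 (n : ℕ) (hn : 1 ≤ n) (x : Fin n → ℝ) (hx : ∀ j, x j ∈ Set.Icc (0:ℝ) 1)
    (hx2 : ∀ j, x j ≠ 1/2) (i : Fin n) (hmin : ∀ j, x i ≤ x j) :
    harden (augmentedBit x i) = 1 ↔ ∀ j, harden (x j) = 1 := by
  have hnpos : (0:ℝ) < n := by exact_mod_cast hn
  unfold augmentedBit harden
  by_cases h : x i > 1/2
  · simp only [h, if_pos]
    have hall : ∀ j, x j > 1/2 := fun j => lt_of_lt_of_le h (hmin j)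
    have hsum : (0:ℝ) < ∑ j, x j := by
      apply Finset.sum_pos (fun j _ => lt_trans (by norm_num) (hall j))
      exact Finset.univ_nonempty_iff.2 (Fin.pos_iff_nonempty.1 hn)
    have hxbar : (0:ℝ) < (∑ j, x j) / n := div_pos hsum hnpos
    have habs : (0:ℝ) < |x i - 1/2| := abs_pos.2 (sub_ne_zero.2 (hx2 i))
    have : (1:ℝ)/2 < 1/2 + (∑ j, x j) / n * |x i - 1/2| := by nlinarith
    rw [if_pos this]
    exact iff_of_true rfl (fun j => by rw [if_pos (hall j)])
  · push_neg at h
    have hlt : x i < 1/2 := lt_of_le_of_ne h (hx2 i)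
    simp only [if_neg (not_lt.2 h)]
    have habs : |x i - 1/2| = 1/2 - x i := by
      rw [abs_of_nonpos (by linarith)]; ring
    have hxbar1 : (∑ j, x j) / n ≤ 1 := by
      rw [div_le_one hnpos]
      calc ∑ j, x j ≤ ∑ _j : Fin n, (1:ℝ) := Finset.sum_le_sum (fun j _ => (hx j).2)
        _ = n := by simp
    have hle : x i + (∑ j, x j) / n * |x i - 1/2| ≤ 1/2 := by
      rw [habs]; nlinarith
    have h1 : ¬ (x i + (∑ j, x j) / n * |x i - 1/2| > 1/2) := not_lt.2 hle
    simp only [h1, if_false]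
    constructor
    · intro hc; exact absurd hc (by norm_num)
    · intro hall
      have := hall i
      rw [if_neg (not_lt.2 (le_of_lt hlt))] at this
      exact absurd this (by norm_num)
end

section
/- Let n ≥ 1 and let x ∈ [0,1]^n with x_j ≠ 1/2 for every j. Let i be an index at which x attains its maximum. Then harden(augmented-bit(x, i)) = 1 if and only if harden(x_j) = 1 for some j; i.e. the function ∂∨(x) = augmented-bit(x, argmax_j x_j) is hard-equivalent to the boolean disjunction ⋁_{j=1}^n x_j. -/
/-- `∂∨(x) = augmentedBit x (argmax_j x j)` is hard-equivalent to boolean disjunction. -/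
theorem stmt4 (n : ℕ) (hn : 1 ≤ n) (x : Fin n → ℝ) (hx : ∀ j, x j ∈ Set.Icc (0:ℝ) 1)
    (hx2 : ∀ j, x j ≠ 1/2) (i : Fin n) (hmax : ∀ j, x j ≤ x i) :
    harden (augmentedBit x i) = 1 ↔ ∃ j, harden (x j) = 1 := by
  have hnpos : (0:ℝ) < n := by exact_mod_cast hn
  have hsum_nonneg : (0:ℝ) ≤ ∑ j, x j :=
    Finset.sum_nonneg fun j _ => (hx j).1
  have hsum_le : (∑ j, x j) ≤ n := by
    calc (∑ j, x j) ≤ ∑ _j : Fin n, (1:ℝ) :=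
          Finset.sum_le_sum fun j _ => (hx j).2
      _ = n := by simp
  have hbar_nonneg : (0:ℝ) ≤ (∑ j, x j) / n := by positivity
  have hbar_le_one : (∑ j, x j) / n ≤ 1 := by
    rw [div_le_one hnpos]; exact hsum_le
  unfold harden augmentedBit
  by_cases hi : x i > 1/2
  · simp only [hi, if_true]
    have hmf : 0 < (∑ j, x j) / n * |x i - 1/2| := by
      have h1 : 0 < (∑ j, x j) / n := by
        have : 0 < ∑ j, x j := by
          have := Finset.single_le_sum (f := x) (fun j _ => (hx j).1) (Finset.mem_univ i)
          linarith
        positivity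
      have h2 : 0 < |x i - 1/2| := abs_pos.mpr (by linarith)
      exact mul_pos h1 h2
    constructor
    · intro _; exact ⟨i, if_pos hi⟩
    · intro _; rw [if_pos (show (1:ℝ)/2 < 1/2 + (∑ j, x j) / n * |x i - 1/2| by linarith)]
  · simp only [hi, if_false]
    push_neg at hi
    have hi' : x i < 1/2 := lt_of_le_of_ne hi (hx2 i)
    have habs : |x i - 1/2| = 1/2 - x i := by rw [abs_of_nonpos (by linarith)]; ring
    have hle : x i + (∑ j, x j) / n * |x i - 1/2| ≤ 1/2 := by
      rw [habs]
      nlinarith [hbar_nonneg, hbar_le_one]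
    constructor
    · intro h
      exfalso
      simp only [if_neg (not_lt.mpr hle)] at h
      exact absurd h (by norm_num)
    · rintro ⟨j, hj⟩
      exfalso
      have h2 : ¬ x j > 1/2 := not_lt.mpr (le_of_lt (lt_of_le_of_lt (hmax j) hi'))
      rw [if_neg h2] at hj
      exact absurd hj (by norm_num)
end

section
/- For all real numbers x, y in [0,1] with x ≠ 1/2 and y ≠ 1/2, harden(∂⇒(x,y)) = 1 if and only if harden(x) = 0 or harden(y) = 1; i.e. the function ∂⇒(x,y) = ∂∨(y, 1 − x) is hard-equivalent to boolean material implication x ⇒ y. -/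
/-- `∂∨(a,b)`: the augmented bit of the two-element vector `[a,b]` at an index of a maximal
entry. -/
noncomputable def dOr (a b : ℝ) : ℝ := augmentedBit ![a, b] (if b ≤ a then 0 else 1)

/-- `∂⇒(x,y) = ∂∨(y, 1 − x)`. -/
noncomputable def dImp (x y : ℝ) : ℝ := dOr y (1 - x)

/-- `∂⇒` is hard-equivalent to boolean material implication. -/
theorem stmt5 (x y : ℝ) (hx : x ∈ Set.Icc (0:ℝ) 1) (hy : y ∈ Set.Icc (0:ℝ) 1)
    (hx2 : x ≠ 1/2) (hy2 : y ≠ 1/2) :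
    harden (dImp x y) = 1 ↔ (harden x = 0 ∨ harden y = 1) := by
  obtain ⟨hx0, hx1⟩ := hx
  obtain ⟨hy0, hy1⟩ := hy
  have key : (1/2 < dImp x y) ↔ (x < 1/2 ∨ 1/2 < y) := by
    unfold dImp dOr augmentedBit
    by_cases h : (1:ℝ) - x ≤ y
    · simp only [h, if_true, Fin.sum_univ_two, Matrix.cons_val_zero, Matrix.cons_val_one,
        Matrix.head_cons]
      push_cast
      by_cases hy' : (1:ℝ)/2 < y
      · rw [if_pos (by exact hy'), abs_of_nonneg (by linarith)]
        constructor
        · intro _; right; exact hy'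
        · intro _; nlinarith
      · have hylt : y < 1/2 := lt_of_le_of_ne (not_lt.mp hy') hy2
        have hxgt : 1/2 < x := by
          rcases lt_or_ge (1/2 : ℝ) x with h' | h'
          · exact h'
          · exfalso; have : x = 1/2 := by linarith
            exact hx2 this
        rw [if_neg (by linarith), abs_of_nonpos (by linarith)]
        constructor
        · intro hg; exfalso; nlinarith
        · rintro (h' | h') <;> linarith
    · push_neg at h
      simp only [not_le.mpr h, if_false, Fin.sum_univ_two, Matrix.cons_val_zero,
        Matrix.cons_val_one, Matrix.head_cons]
      push_cast
      by_cases hx' : x < 1/2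
      · rw [if_pos (by linarith : (1:ℝ) - x > 1/2), abs_of_nonneg (by linarith)]
        constructor
        · intro _; left; exact hx'
        · intro _; nlinarith
      · have hxgt : 1/2 < x := lt_of_le_of_ne (not_lt.mp hx') (Ne.symm hx2)
        have hylt : y < 1/2 := by linarith
        rw [if_neg (by push_neg; linarith), abs_of_nonpos (by linarith)]
        constructor
        · intro hg; exfalso; nlinarith
        · rintro (h' | h') <;> linarith
  simp only [harden]
  constructor
  · intro hg
    by_cases hc : dImp x y > 1/2
    · have := key.mp hc
      rcases this with h' | h'
      · left; rw [if_neg (by linarith)]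
      · right; rw [if_pos h']
    · rw [if_neg hc] at hg; exact absurd hg (by norm_num)
  · intro hg
    have : 1/2 < dImp x y := by
      apply key.mpr
      rcases hg with h' | h'
      · left
        by_contra hc
        rw [if_pos (lt_of_le_of_ne (not_lt.mp hc) (Ne.symm hx2))] at h'
        exact absurd h' (by norm_num)
      · right
        by_contra hc
        rw [if_neg (by exact fun hh => hc hh)] at h'
        exact absurd h' (by norm_num)
    rw [if_pos this]
end

section
/- Let n ≥ 1 and let x ∈ [0,1]^n with x_j ≠ 1/2 for every j. Then harden(∂Maj(x)) = Maj(harden(x_1),…,harden(x_n)), where ∂Maj(x) = augmented-bit(sort(x), ⌈n/2⌉); i.e. the differentiable function ∂Maj is hard-equivalent to the boolean majority function Maj. -/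
/-- `∂Maj(x) = augmentedBit (sort x) ⌈n/2⌉` is hard-equivalent to boolean majority
`Maj(b) = ⌊1/2 + ((Σ b_j) − 1/2)/n⌋` (here `y` is the ascending rearrangement of `x` and
`i` is the majority index `⌈n/2⌉`, 1-based). -/
theorem stmt8 (n : ℕ) (hn : 1 ≤ n) (x : Fin n → ℝ) (hx : ∀ j, x j ∈ Set.Icc (0:ℝ) 1)
    (hx2 : ∀ j, x j ≠ 1/2)
    (y : Fin n → ℝ) (σ : Equiv.Perm (Fin n)) (hy : y = x ∘ σ) (hmono : Monotone y)
    (i : Fin n) (hi : (i : ℕ) + 1 = (n + 1) / 2) :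
    (harden (augmentedBit y i) : ℤ) =
      ⌊(1:ℝ)/2 + ((∑ j, (harden (x j) : ℝ)) - 1/2) / n⌋ := by
  have hσ : ∀ j, y j = x (σ j) := fun j => by rw [hy]; rfl
  have hn0 : (0:ℝ) < (n:ℝ) := by exact_mod_cast hn
  have hy0 : ∀ j, 0 ≤ y j := fun j => by rw [hσ]; exact (hx (σ j)).1
  have hy1 : ∀ j, y j ≤ 1 := fun j => by rw [hσ]; exact (hx (σ j)).2
  have hy2 : ∀ j, y j ≠ 1/2 := fun j => by rw [hσ]; exact hx2 (σ j)
  set k := (Finset.univ.filter (fun j => y j > 1/2)).card with hk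
  have hsum : (∑ j, (harden (x j) : ℝ)) = k := by
    have h1 : (∑ j, (harden (x j) : ℝ)) = ∑ j, (harden (y j) : ℝ) := by
      rw [hy]
      exact (Equiv.sum_comp σ fun j => (harden (x j) : ℝ)).symm
    rw [h1, hk, ← Finset.sum_boole]
    congr 1
    ext j
    unfold harden
    split <;> simp
  have hkn : k ≤ n := by
    calc k ≤ Finset.univ.card := Finset.card_filter_le _ _
      _ = n := by simp
  have hkey : y i > 1/2 ↔ n < 2 * k := by
    constructor
    · intro h
      have hsub : Finset.Ici i ⊆ Finset.univ.filter (fun j => y j > 1/2) := by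
        intro j hj
        simp only [Finset.mem_filter, Finset.mem_univ, true_and]
        exact lt_of_lt_of_le h (hmono (Finset.mem_Ici.mp hj))
      have hc : n - (i : ℕ) ≤ k := by
        have := Finset.card_le_card hsub
        rwa [Fin.card_Ici] at this
      have := i.isLt
      omega
    · intro h
      by_contra hcon
      have hlt : y i < 1/2 := lt_of_le_of_ne (not_lt.mp hcon) (hy2 i)
      have hsub : Finset.univ.filter (fun j => y j > 1/2) ⊆ Finset.Ioi i := by
        intro j hj
        simp only [Finset.mem_filter, Finset.mem_univ, true_and] at hj
        rw [Finset.mem_Ioi]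
        by_contra hji
        exact absurd (lt_of_le_of_lt (hmono (not_lt.mp hji)) hlt) (not_lt.mpr (le_of_lt hj))
      have hc : k ≤ n - 1 - (i : ℕ) := by
        have := Finset.card_le_card hsub
        rwa [Fin.card_Ioi] at this
      have := i.isLt
      omega
  rw [hsum]
  by_cases h : y i > 1/2
  · have h2k : n < 2 * k := hkey.mp h
    have hge : (1:ℝ)/2 ≤ ((k:ℝ) - 1/2)/n := by
      rw [le_div_iff₀ hn0]
      have : (n:ℝ) + 1 ≤ 2 * (k:ℝ) := by exact_mod_cast h2k
      linarith
    have hlt2 : ((k:ℝ) - 1/2)/n < 1 := by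
      rw [div_lt_iff₀ hn0]
      have : (k:ℝ) ≤ n := by exact_mod_cast hkn
      linarith
    have hfloor : ⌊(1:ℝ)/2 + ((k:ℝ) - 1/2)/n⌋ = 1 := by
      rw [Int.floor_eq_iff]
      constructor
      · push_cast; linarith
      · push_cast; linarith
    rw [hfloor]
    -- now harden (augmentedBit y i) = 1
    have hpos : 0 < (∑ j, y j) / n * |y i - 1/2| := by
      apply mul_pos
      · apply div_pos _ hn0
        have h1 : y i ≤ ∑ j, y j :=
          Finset.single_le_sum (fun j _ => hy0 j) (Finset.mem_univ i)
        linarith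
      · rw [abs_pos]
        intro hc
        exact hy2 i (by linarith)
    have hab : augmentedBit y i = 1/2 + (∑ j, y j) / n * |y i - 1/2| := by
      simp only [augmentedBit, if_pos h]
    have : harden (augmentedBit y i) = 1 := by
      unfold harden
      rw [if_pos]
      rw [hab]; linarith
    rw [this]; norm_num
  · have h2k : ¬ (n < 2 * k) := fun hc => h (hkey.mpr hc)
    have hlt : y i < 1/2 := lt_of_le_of_ne (not_lt.mp h) (hy2 i)
    have hge : (0:ℝ) ≤ 1/2 + ((k:ℝ) - 1/2)/n := by
      have : (-(1:ℝ)/2) * n ≤ (k:ℝ) - 1/2 := by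
        have hk0 : (0:ℝ) ≤ (k:ℝ) := Nat.cast_nonneg k
        have hn1 : (1:ℝ) ≤ n := by exact_mod_cast hn
        nlinarith
      have := (le_div_iff₀ hn0).mpr this
      linarith
    have hlt1 : ((k:ℝ) - 1/2)/n < 1/2 := by
      rw [div_lt_iff₀ hn0]
      have : 2 * (k:ℝ) ≤ n := by exact_mod_cast Nat.not_lt.mp h2k
      linarith
    have hfloor : ⌊(1:ℝ)/2 + ((k:ℝ) - 1/2)/n⌋ = 0 := by
      rw [Int.floor_eq_iff]
      constructor
      · push_cast; linarith
      · push_cast; linarith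
    rw [hfloor]
    have hxbar : (∑ j, y j) / n ≤ 1 := by
      rw [div_le_one hn0]
      calc (∑ j, y j) ≤ ∑ _j : Fin n, (1:ℝ) := Finset.sum_le_sum (fun j _ => hy1 j)
        _ = n := by simp
    have hxbar0 : 0 ≤ (∑ j, y j) / n :=
      div_nonneg (Finset.sum_nonneg fun j _ => hy0 j) (le_of_lt hn0)
    have habs : |y i - 1/2| = 1/2 - y i := by
      rw [abs_of_neg (by linarith)]; ring
    have hab : augmentedBit y i = y i + (∑ j, y j) / n * (1/2 - y i) := by
      simp only [augmentedBit, if_neg h, habs]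
    have hle : augmentedBit y i ≤ 1/2 := by
      rw [hab]
      nlinarith
    have : harden (augmentedBit y i) = 0 := by
      unfold harden
      rw [if_neg]
      linarith
    rw [this]; norm_num
end

section
/- For all real numbers w, x in [0,1] with w ≠ 1/2 and x ≠ 1/2, harden(max(min(w, x), min(1 − w, 1 − x))) = 1 if and only if harden(x) = harden(w); i.e. the composite Gödel-style function max(min(w,x), min(1−w,1−x)) is hard-equivalent to the boolean function ¬(x ⊕ w) (XNOR). -/
/-- The composite Gödel-style function `max(min(w,x), min(1−w,1−x))` is hard-equivalent to
XNOR: it hardens to 1 iff `harden x = harden w`. -/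
theorem stmt13 (w x : ℝ) (hw : w ∈ Set.Icc (0:ℝ) 1) (hx : x ∈ Set.Icc (0:ℝ) 1)
    (hw2 : w ≠ 1/2) (hx2 : x ≠ 1/2) :
    harden (max (min w x) (min (1 - w) (1 - x))) = 1 ↔ harden x = harden w := by
  have key : max (min w x) (min (1 - w) (1 - x)) > 1/2 ↔
      (x > 1/2 ↔ w > 1/2) := by
    constructor
    · intro h
      rcases max_cases (min w x) (min (1 - w) (1 - x)) with ⟨he, _⟩ | ⟨he, _⟩ <;>
        rw [he] at h <;>
        rcases min_cases w x with ⟨e2, _⟩ | ⟨e2, _⟩ <;>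
        rcases min_cases (1-w) (1-x) with ⟨e3, _⟩ | ⟨e3, _⟩ <;>
        constructor <;> intro <;> linarith
    · intro h
      rcases lt_or_gt_of_ne hw2 with h1 | h1
      · have h2 : ¬ x > 1/2 := by intro hc; linarith [h.mp hc]
        push_neg at h2
        have h2' : x < 1/2 := lt_of_le_of_ne h2 hx2
        calc (1:ℝ)/2 < min (1-w) (1-x) := by simp [lt_min_iff]; constructor <;> linarith
          _ ≤ _ := le_max_right _ _
      · have h2 : x > 1/2 := by
          rcases lt_or_gt_of_ne hx2 with h2 | h2
          · exact absurd (h.mpr h1) (by linarith)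
          · exact h2
        calc (1:ℝ)/2 < min w x := by simp [lt_min_iff]; constructor <;> linarith
          _ ≤ _ := le_max_left _ _
  have h2 : harden (max (min w x) (min (1 - w) (1 - x))) = 1 ↔
      max (min w x) (min (1 - w) (1 - x)) > 1/2 := by
    simp only [harden]; split_ifs with h
    · exact iff_of_true rfl h
    · exact iff_of_false (by norm_num) h
  have h3 : (harden x = harden w) ↔ (x > 1/2 ↔ w > 1/2) := by
    simp only [harden]
    by_cases ha : x > 1/2 <;> by_cases hb : w > 1/2 <;>
      [rw [if_pos ha, if_pos hb]; rw [if_pos ha, if_neg hb];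
       rw [if_neg ha, if_pos hb]; rw [if_neg ha, if_neg hb]] <;>
      [exact iff_of_true rfl (iff_of_true ha hb);
       exact iff_of_false (by simp) (fun h => hb (h.mp ha));
       exact iff_of_false (by simp) (fun h => ha (h.mpr hb));
       exact iff_of_true rfl (iff_of_false ha hb)]
  rw [h2, key, ← h3]
end

section
/- Let n ≥ 1 and let w, x ∈ [0,1]^n with w_j ≠ 1/2 and x_j ≠ 1/2 for every j. Then harden(min_{j} ∂⇒(w_j, x_j)) = 1 if and only if for every j with harden(w_j) = 1 one has harden(x_j) = 1; i.e. the ∂∧-neuron (w, x) ↦ min(∂⇒(w_1,x_1),…,∂⇒(w_n,x_n)) is hard-equivalent to the boolean function ⋀_{j=1}^n (w_j ⇒ x_j), which computes the conjunction of exactly those inputs x_j selected by a high weight w_j. -/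
lemma harden_eq_one {y : ℝ} : harden y = 1 ↔ y > 1/2 := by
  simp [harden]

lemma dOr_gt (a b : ℝ) (ha : a ∈ Set.Icc (0:ℝ) 1) (hb : b ∈ Set.Icc (0:ℝ) 1)
    (ha2 : a ≠ 1/2) (hb2 : b ≠ 1/2) :
    1/2 < dOr a b ↔ (a > 1/2 ∨ b > 1/2) := by
  obtain ⟨ha0, ha1⟩ := ha
  obtain ⟨hb0, hb1⟩ := hb
  unfold dOr augmentedBit
  by_cases hba : b ≤ a
  · simp only [if_pos hba, Fin.sum_univ_two, Matrix.cons_val_zero, Matrix.cons_val_one,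
      Matrix.head_cons, Nat.cast_ofNat]
    by_cases h : a > 1/2
    · rw [if_pos h, abs_of_pos (by linarith)]
      constructor
      · intro _; left; exact h
      · intro _; nlinarith
    · have h' : a < 1/2 := lt_of_le_of_ne (not_lt.mp h) ha2
      rw [if_neg h, abs_of_neg (by linarith)]
      constructor
      · intro hgt; exfalso; nlinarith
      · rintro (h1 | h1) <;> [exact absurd h1 h; linarith]
  · push_neg at hba
    simp only [if_neg (not_le.mpr hba), Fin.sum_univ_two, Matrix.cons_val_zero,
      Matrix.cons_val_one, Matrix.head_cons, Nat.cast_ofNat]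
    by_cases h : b > 1/2
    · rw [if_pos h, abs_of_pos (by linarith)]
      constructor
      · intro _; right; exact h
      · intro _; nlinarith
    · have h' : b < 1/2 := lt_of_le_of_ne (not_lt.mp h) hb2
      rw [if_neg h, abs_of_neg (by linarith)]
      constructor
      · intro hgt; exfalso; nlinarith
      · rintro (h1 | h1) <;> [linarith; exact absurd h1 h]

/-- The `∂∧`-neuron `(w,x) ↦ min_j ∂⇒(w_j, x_j)` is hard-equivalent to
`⋀_j (w_j ⇒ x_j)`. -/
theorem stmt15 (n : ℕ) (hn : 1 ≤ n) (w x : Fin n → ℝ)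
    (hw : ∀ j, w j ∈ Set.Icc (0:ℝ) 1) (hx : ∀ j, x j ∈ Set.Icc (0:ℝ) 1)
    (hw2 : ∀ j, w j ≠ 1/2) (hx2 : ∀ j, x j ≠ 1/2) :
    harden (Finset.univ.inf'
        (Finset.univ_nonempty_iff.mpr (Fin.pos_iff_nonempty.mp hn))
        (fun j => dImp (w j) (x j))) = 1 ↔
      ∀ j, harden (w j) = 1 → harden (x j) = 1 := by
  rw [harden_eq_one, gt_iff_lt, Finset.lt_inf'_iff]
  constructor
  · intro h j hwj
    have := h j (Finset.mem_univ j)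
    rw [dImp, dOr_gt (x j) (1 - w j) (hx j) ⟨by linarith [(hw j).2], by linarith [(hw j).1]⟩ (hx2 j)
      (by intro hc; exact hw2 j (by linarith))] at this
    rw [harden_eq_one] at hwj ⊢
    rcases this with h1 | h1
    · exact h1
    · linarith
  · intro h j _
    rw [dImp, dOr_gt (x j) (1 - w j) (hx j) ⟨by linarith [(hw j).2], by linarith [(hw j).1]⟩ (hx2 j)
      (by intro hc; exact hw2 j (by linarith))]
    by_cases hwj : w j > 1/2
    · left; exact harden_eq_one.mp (h j (harden_eq_one.mpr hwj))
    · right; have : w j < 1/2 := lt_of_le_of_ne (not_lt.mp hwj) (hw2 j); linarith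
end
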